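/- For mutually absolutely continuous probability measures μ_0, μ_1 with μ_0 ≠ μ_1 and finite KL divergences, the Chernoff distance satisfies Ch(μ_0, μ_1) < KL(μ_0, μ_1) and Ch(μ_0, μ_1) = Ch(μ_1, μ_0). -/

import Mathlib

/-!
On probability measures `KL` is Mathlib's `klDiv`, an `f`-divergence for the convex function
`klFun`. Convexity of `klFun` bounds the divergence of the mixture `a • μ₀ + b • μ₁`
(`a + b = 1`) from `μ₁` by `a · KL(μ₀, μ₁)` and from `μ₀` by `b · KL(μ₁, μ₀)`. Since
`k₀ = KL(μ₀, μ₁)` is positive (Gibbs, as `μ₀ ≠ μ₁`) and `k₁ = KL(μ₁, μ₀)` is finite, the weights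
`a = k₁ / (k₀ + k₁)`, `b = k₀ / (k₀ + k₁)` make both bounds smaller than `k₀`.
-/

open MeasureTheory
open scoped Classical

/-- Kullback–Leibler divergence: `∫ log (dν/dμ) dν` when `ν ≪ μ` and the integral is
well-defined, and `+∞` otherwise. -/
noncomputable def KL {X : Type*} [MeasurableSpace X] (ν μ : Measure X) : ENNReal :=
  if ν ≪ μ ∧ Integrable (fun x => Real.log ((ν.rnDeriv μ x).toReal)) ν then
    ENNReal.ofReal (∫ x, Real.log ((ν.rnDeriv μ x).toReal) ∂ν)
  else ⊤

/-- Chernoff distance: the infimum over probability measures `ν` of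
`max {KL(ν, μ0), KL(ν, μ1)}`. -/
noncomputable def Ch {X : Type*} [MeasurableSpace X] (μ0 μ1 : Measure X) : ENNReal :=
  ⨅ (ν : Measure X) (_ : IsProbabilityMeasure ν), max (KL ν μ0) (KL ν μ1)

open InformationTheory
open scoped NNReal ENNReal

lemma klFun_mul_add_le {r : ℝ} (hr : 0 ≤ r) {a b : ℝ} (ha : 0 ≤ a) (hb : 0 ≤ b)
    (hab : a + b = 1) : klFun (a * r + b) ≤ a * klFun r := by
  simpa [klFun_one] using
    convexOn_klFun.2 (Set.mem_Ici.2 hr) (Set.mem_Ici.2 zero_le_one) ha hb hab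

lemma exists_add_eq_one_mul_lt {k₀ : ℝ≥0} (hk₀ : 0 < k₀) (k₁ : ℝ≥0) :
    ∃ a b : ℝ≥0, a + b = 1 ∧ a * k₀ < k₀ ∧ b * k₁ < k₀ := by
  have hpos : 0 < k₀ + k₁ := add_pos_of_pos_of_nonneg hk₀ k₁.2
  refine ⟨k₁ / (k₀ + k₁), k₀ / (k₀ + k₁), ?_, ?_, ?_⟩
  · rw [← add_div, add_comm, div_self hpos.ne']
  · exact mul_lt_of_lt_one_left hk₀ ((div_lt_one hpos).2 (lt_add_of_pos_left k₁ hk₀))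
  · rw [div_mul_eq_mul_div, div_lt_iff₀ hpos]
    exact mul_lt_mul_of_pos_left (lt_add_of_pos_left k₁ hk₀) hk₀

section

variable {X : Type*} [MeasurableSpace X]

lemma KL_eq_klDiv (ν μ : Measure X) [IsProbabilityMeasure ν] [IsProbabilityMeasure μ] :
    KL ν μ = klDiv ν μ := by
  rw [KL, klDiv_def]
  simp only [probReal_univ, add_sub_cancel_right]
  rfl

lemma Ch_comm (μ₀ μ₁ : Measure X) : Ch μ₀ μ₁ = Ch μ₁ μ₀ :=
  iInf_congr fun _ => iInf_congr fun _ => max_comm _ _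

lemma isProbabilityMeasure_smul_add_smul (μ ν : Measure X) [IsProbabilityMeasure μ]
    [IsProbabilityMeasure ν] {a b : ℝ≥0} (hab : a + b = 1) :
    IsProbabilityMeasure (a • μ + b • ν) :=
  ⟨by simp [← ENNReal.coe_add, hab]⟩

lemma rnDeriv_smul_add_smul_self (μ ν : Measure X) [IsFiniteMeasure μ] [IsFiniteMeasure ν]
    (a b : ℝ≥0) : (a • μ + b • ν).rnDeriv ν =ᵐ[ν] fun x => a * μ.rnDeriv ν x + b := by
  filter_upwards [Measure.rnDeriv_add (a • μ) (b • ν) ν, Measure.rnDeriv_smul_left μ ν a,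
    Measure.rnDeriv_smul_left ν ν b, ν.rnDeriv_self] with x hadd hμ hν hself
  rw [hadd, Pi.add_apply, hμ, hν, Pi.smul_apply, Pi.smul_apply, hself]
  simp [ENNReal.smul_def]

lemma klDiv_smul_add_smul_self_le {μ ν : Measure X} [IsFiniteMeasure μ] [IsFiniteMeasure ν]
    (hμν : μ ≪ ν) {a b : ℝ≥0} (hab : a + b = 1) :
    klDiv (a • μ + b • ν) ν ≤ a * klDiv μ ν := by
  have hac : a • μ + b • ν ≪ ν :=
    (hμν.smul_left a).add_left (Measure.AbsolutelyContinuous.rfl.smul_left b)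
  rw [klDiv_eq_lintegral_klFun_of_ac hac, klDiv_eq_lintegral_klFun_of_ac hμν,
    ← lintegral_const_mul' _ _ ENNReal.coe_ne_top]
  refine lintegral_mono_ae ?_
  filter_upwards [rnDeriv_smul_add_smul_self μ ν a b, μ.rnDeriv_lt_top ν] with x hx hlt
  rw [hx, ENNReal.toReal_add (by finiteness) ENNReal.coe_ne_top, ENNReal.toReal_mul,
    ENNReal.coe_toReal, ENNReal.coe_toReal, ← ENNReal.ofReal_coe_nnreal,
    ← ENNReal.ofReal_mul a.coe_nonneg]
  exact ENNReal.ofReal_le_ofReal <|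
    klFun_mul_add_le ENNReal.toReal_nonneg a.coe_nonneg b.coe_nonneg (by exact_mod_cast hab)

end

/-- For mutually absolutely continuous probability measures `μ0 ≠ μ1` with finite KL
divergences: `Ch(μ0, μ1) < KL(μ0, μ1)` and `Ch(μ0, μ1) = Ch(μ1, μ0)`. -/
theorem stmt3 {X : Type*} [MeasurableSpace X]
    (μ0 μ1 : Measure X) [IsProbabilityMeasure μ0] [IsProbabilityMeasure μ1]
    (h01 : μ0 ≪ μ1) (h10 : μ1 ≪ μ0) (hne : μ0 ≠ μ1)
    (hf1 : KL μ0 μ1 ≠ ⊤) (hf2 : KL μ1 μ0 ≠ ⊤) :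
    Ch μ0 μ1 < KL μ0 μ1 ∧ Ch μ0 μ1 = Ch μ1 μ0 := by
  rw [KL_eq_klDiv] at hf1 hf2 ⊢
  refine ⟨?_, Ch_comm μ0 μ1⟩
  have hpos : 0 < (klDiv μ0 μ1).toNNReal :=
    ENNReal.toNNReal_pos (klDiv_eq_zero_iff.not.2 hne) hf1
  obtain ⟨a, b, hab, ha, hb⟩ := exists_add_eq_one_mul_lt hpos (klDiv μ1 μ0).toNNReal
  have hmix := isProbabilityMeasure_smul_add_smul μ0 μ1 hab
  calc Ch μ0 μ1 ≤ max (KL (a • μ0 + b • μ1) μ0) (KL (a • μ0 + b • μ1) μ1) := iInf₂_le _ hmix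
    _ = max (klDiv (b • μ1 + a • μ0) μ0) (klDiv (a • μ0 + b • μ1) μ1) := by
      rw [KL_eq_klDiv, KL_eq_klDiv, add_comm (a • μ0)]
    _ ≤ max (b * klDiv μ1 μ0) (a * klDiv μ0 μ1) :=
      max_le_max (klDiv_smul_add_smul_self_le h10 (by rwa [add_comm]))
        (klDiv_smul_add_smul_self_le h01 hab)
    _ < klDiv μ0 μ1 := by
      rw [← ENNReal.coe_toNNReal hf1, ← ENNReal.coe_toNNReal hf2]
      exact max_lt (by exact_mod_cast hb) (by exact_mod_cast ha)
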